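/- Let A be the 3×3 coloring matrix with rows (0,0,0), (1,0,1), (1,0,0). For n ≥ 1, the number of A-colored plane trees with n vertices and root color 2 is F_{2n-1}, where F_k is the k-th Fibonacci number (F_1 = F_2 = 1). Equivalently, defining E_1 = 1, E_2 = 2, the counts satisfy E_n = 3E_{n-1} - E_{n-2}. -/
import Mathlib


inductive CTree (α : Type) : Type
  | node : α → List (CTree α) → CTree α

namespace CTree

def color {α : Type} : CTree α → α
  | node c _ => c

def children {α : Type} : CTree α → List (CTree α)
  | node _ ts => ts

def size {α : Type} : CTree α → ℕ
  | node _ ts => 1 + (ts.attach.map fun t => size t.1).sum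
decreasing_by
  have := List.sizeOf_lt_of_mem t.2
  simp only [CTree.node.sizeOf_spec]
  omega

def Valid {α : Type} (A : Matrix α α ℕ) : CTree α → Prop
  | node c ts => ∀ t ∈ ts, A c t.color = 1 ∧ Valid A t

end CTree

/-- Number of `A`-colored plane trees with `n` vertices and root color `i`. -/
noncomputable def colorCount {m : ℕ} (A : Matrix (Fin m) (Fin m) ℕ) (i : Fin m) (n : ℕ) : ℕ :=
  {t : CTree (Fin m) | t.Valid A ∧ t.size = n ∧ t.color = i}.ncard

/-- Total number of `A`-colored plane trees with `n` vertices. -/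
noncomputable def totalCount {α : Type} (A : Matrix α α ℕ) (n : ℕ) : ℕ :=
  {t : CTree α | t.Valid A ∧ t.size = n}.ncard

section Aux
open CTree

abbrev A3 : Matrix (Fin 3) (Fin 3) ℕ := !![0, 0, 0; 1, 0, 1; 1, 0, 0]

lemma size_node {α : Type} (c : α) (ts : List (CTree α)) :
    (CTree.node c ts).size = 1 + (ts.map CTree.size).sum := by
  rw [CTree.size, List.attach_map_val]

lemma valid_node {α : Type} (A : Matrix α α ℕ) (c : α) (ts : List (CTree α)) :
    (CTree.node c ts).Valid A ↔ ∀ t ∈ ts, A c t.color = 1 ∧ t.Valid A := by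
  conv_lhs => rw [CTree.Valid]

def leaf0 : CTree (Fin 3) := .node 0 []

def enc : Option ℕ → CTree (Fin 3)
  | none => leaf0
  | some k => .node 2 (List.replicate k leaf0)

def dec : CTree (Fin 3) → Option ℕ
  | .node d us => if d = 2 then some us.length else none

def FF (l : List (Option ℕ)) : CTree (Fin 3) := .node 1 (l.map enc)

def ww : Option ℕ → ℕ
  | none => 1
  | some k => k + 1

lemma dec_enc (x : Option ℕ) : dec (enc x) = x := by
  cases x <;> simp [enc, dec, leaf0]

lemma enc_injective : Function.Injective enc :=
  Function.LeftInverse.injective dec_enc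

lemma size_enc (x : Option ℕ) : (enc x).size = ww x := by
  cases x with
  | none => simp [enc, leaf0, size_node, ww]
  | some k =>
    simp only [enc, ww, size_node]
    rw [List.map_replicate]
    simp [leaf0, size_node]
    omega

lemma size_FF (l : List (Option ℕ)) : (FF l).size = 1 + (l.map ww).sum := by
  rw [FF, size_node, List.map_map]
  congr 1
  exact congrArg List.sum (List.map_congr_left fun x _ => size_enc x)

lemma color_node {α : Type} (c : α) (ts : List (CTree α)) : (CTree.node c ts).color = c := rfl

lemma valid_FF (l : List (Option ℕ)) : (FF l).Valid A3 := by
  rw [FF, valid_node]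
  intro t ht
  rw [List.mem_map] at ht
  obtain ⟨x, -, rfl⟩ := ht
  cases x with
  | none =>
    refine ⟨?_, ?_⟩
    · rw [enc, leaf0, color_node]; decide
    · rw [enc, leaf0, valid_node]; simp
  | some k =>
    refine ⟨?_, ?_⟩
    · rw [enc, color_node]; decide
    · rw [enc, valid_node]
      intro u hu
      rw [List.eq_of_mem_replicate hu]
      refine ⟨?_, ?_⟩
      · rw [leaf0, color_node]; decide
      · rw [leaf0, valid_node]; simp

lemma color_eq_zero_of {t : CTree (Fin 3)} (h : A3 2 t.color = 1) : t.color = 0 := by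
  revert h
  have : t.color = 0 ∨ t.color = 1 ∨ t.color = 2 := by omega
  rcases this with h | h | h <;> rw [h] <;> decide

lemma no_child0 (t : CTree (Fin 3)) : A3 0 t.color ≠ 1 := by
  have : t.color = 0 ∨ t.color = 1 ∨ t.color = 2 := by omega
  rcases this with h | h | h <;> rw [h] <;> decide

lemma valid0_eq {t : CTree (Fin 3)} (hv : t.Valid A3) (hc : t.color = 0) : t = leaf0 := by
  obtain ⟨c, ts⟩ := t
  have hc1 : c = 0 := hc
  subst hc1
  rw [valid_node] at hv
  have hts : ts = [] := by
    rw [List.eq_nil_iff_forall_not_mem]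
    intro u hu
    exact no_child0 u (hv u hu).1
  rw [hts, leaf0]

lemma eq_FF_of_valid {t : CTree (Fin 3)} (hv : t.Valid A3) (hc : t.color = 1) :
    ∃ l : List (Option ℕ), t = FF l := by
  obtain ⟨c, ts⟩ := t
  have hc1 : c = 1 := hc
  subst hc1
  refine ⟨ts.map dec, ?_⟩
  rw [FF, List.map_map]
  rw [valid_node] at hv
  have h : ∀ s ∈ ts, (enc ∘ dec) s = id s := by
    intro s hs
    obtain ⟨hA, hvs⟩ := hv s hs
    obtain ⟨d, us⟩ := s
    rw [color_node] at hA
    have hd : d = 0 ∨ d = 1 ∨ d = 2 := by omega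
    rcases hd with hd | hd | hd
    · subst hd
      have := valid0_eq hvs (by rw [color_node])
      rw [this, leaf0]
      rfl
    · exfalso; rw [hd] at hA; revert hA; decide
    · subst hd
      rw [valid_node] at hvs
      have hus : us = List.replicate us.length leaf0 := by
        rw [List.eq_replicate_iff]
        refine ⟨rfl, fun u hu => ?_⟩
        obtain ⟨hA2, hvu⟩ := hvs u hu
        exact valid0_eq hvu (color_eq_zero_of hA2)
      show enc (dec (node 2 us)) = node 2 us
      simp only [dec, enc, if_pos rfl]
      exact congrArg _ hus.symm
  rw [List.map_congr_left h, List.map_id]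


lemma FF_injective : Function.Injective FF := by
  intro l l' h
  rw [FF, FF] at h
  injection h with _ h2
  exact (List.map_injective_iff.mpr enc_injective) h2

def S : ℕ → Finset (List (Option ℕ))
  | 0 => {[]}
  | (m+1) => ((S m).image (List.cons none)) ∪
      (Finset.range (m+1)).biUnion fun k => (S (m-k)).image (List.cons (some k))

lemma mem_S (l : List (Option ℕ)) : ∀ m, l ∈ S m ↔ (l.map ww).sum = m := by
  induction l with
  | nil =>
    intro m
    cases m with
    | zero => simp [S]
    | succ m => simp [S]
  | cons x r ih =>
    intro m
    cases m with
    | zero =>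
      simp only [S, Finset.mem_singleton, List.map_cons, List.sum_cons]
      constructor
      · intro h; exact absurd h (by simp)
      · intro h; cases x <;> simp [ww] at h
    | succ m =>
      rw [S]
      simp only [Finset.mem_union, Finset.mem_image, Finset.mem_biUnion, Finset.mem_range,
        List.map_cons, List.sum_cons]
      cases x with
      | none =>
        constructor
        · rintro (⟨a, ha, heq⟩ | ⟨k, hk, a, ha, heq⟩)
          · injection heq with h1 h2
            subst h2
            have := (ih m).mp ha
            simp [ww]; omega
          · injection heq with h1 h2
            exact absurd h1 (by simp)
        · intro h
          simp only [ww] at h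
          exact Or.inl ⟨r, (ih m).mpr (by omega), rfl⟩
      | some k =>
        constructor
        · rintro (⟨a, ha, heq⟩ | ⟨k', hk', a, ha, heq⟩)
          · injection heq with h1 h2
            exact absurd h1 (by simp)
          · injection heq with h1 h2
            injection h1 with h1
            subst h1; subst h2
            have := (ih _).mp ha
            simp only [ww]; omega
        · intro h
          simp only [ww] at h
          refine Or.inr ⟨k, by omega, r, (ih _).mpr (by omega), rfl⟩

lemma sum_odd_fib (n : ℕ) : ∑ i ∈ Finset.range n, Nat.fib (2*i+1) = Nat.fib (2*n) := by
  induction n with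
  | zero => simp
  | succ n ih =>
    rw [Finset.sum_range_succ, ih, show 2*(n+1) = 2*n+2 by ring, Nat.fib_add_two]

lemma card_S (m : ℕ) : (S m).card = Nat.fib (2*m+1) := by
  induction m using Nat.strong_induction_on with
  | _ m ih =>
    match m with
    | 0 => simp [S]
    | (m+1) =>
      rw [S]
      have hdisj : Disjoint ((S m).image (List.cons none))
          ((Finset.range (m+1)).biUnion fun k => (S (m-k)).image (List.cons (some k))) := by
        rw [Finset.disjoint_left]
        rintro l hl hr
        simp only [Finset.mem_image] at hl
        simp only [Finset.mem_biUnion, Finset.mem_image] at hr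
        obtain ⟨a, -, rfl⟩ := hl
        obtain ⟨k, -, b, -, heq⟩ := hr
        injection heq with h1 _
        exact absurd h1 (by simp)
      have hpd : ∀ k ∈ Finset.range (m+1), ∀ k' ∈ Finset.range (m+1), k ≠ k' →
          Disjoint ((S (m-k)).image (List.cons (some k)))
            ((S (m-k')).image (List.cons (some k'))) := by
        intro k _ k' _ hkk'
        rw [Finset.disjoint_left]
        rintro l hl hr
        simp only [Finset.mem_image] at hl hr
        obtain ⟨a, -, rfl⟩ := hl
        obtain ⟨b, -, heq⟩ := hr
        injection heq with h1 _
        injection h1 with h1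
        exact hkk' h1.symm
      rw [Finset.card_union_of_disjoint hdisj,
        Finset.card_image_of_injective _ (List.cons_injective),
        Finset.card_biUnion hpd]
      have hsum : ∑ k ∈ Finset.range (m+1), ((S (m-k)).image (List.cons (some k))).card
          = ∑ k ∈ Finset.range (m+1), Nat.fib (2*(m-k)+1) := by
        refine Finset.sum_congr rfl fun k hk => ?_
        rw [Finset.card_image_of_injective _ (List.cons_injective)]
        exact ih (m-k) (by rw [Finset.mem_range] at hk; omega)
      have hrefl : ∑ k ∈ Finset.range (m+1), Nat.fib (2*(m-k)+1)
          = ∑ k ∈ Finset.range (m+1), Nat.fib (2*k+1) := by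
        rw [← Finset.sum_range_reflect (fun j => Nat.fib (2*j+1)) (m+1)]
        refine Finset.sum_congr rfl fun k hk => ?_
        rw [Finset.mem_range] at hk
        congr 1
      rw [hsum, hrefl, sum_odd_fib, ih m (by omega)]
      have h2 : 2*(m+1)+1 = (2*m+1)+2 := by ring
      have h3 : 2*(m+1) = (2*m+1)+1 := by ring
      rw [h2, h3]
      have e1 := Nat.fib_add_two (n := 2*m+1)
      omega

lemma count_eq (n : ℕ) (hn : 1 ≤ n) :
    colorCount A3 1 n = Nat.fib (2*n-1) := by
  have hset : {t : CTree (Fin 3) | t.Valid A3 ∧ t.size = n ∧ t.color = 1}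
      = FF '' {l | (l.map ww).sum = n - 1} := by
    ext t
    simp only [Set.mem_setOf_eq, Set.mem_image]
    constructor
    · rintro ⟨hv, hs, hc⟩
      obtain ⟨l, rfl⟩ := eq_FF_of_valid hv hc
      refine ⟨l, ?_, rfl⟩
      rw [size_FF] at hs
      omega
    · rintro ⟨l, hl, rfl⟩
      refine ⟨valid_FF l, ?_, rfl⟩
      rw [size_FF, hl]
      omega
  have hset2 : {l : List (Option ℕ) | (l.map ww).sum = n - 1} = ↑(S (n-1)) := by
    ext l
    simp [mem_S]
  rw [colorCount]
  rw [hset, Set.ncard_image_of_injective _ FF_injective, hset2,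
    Set.ncard_coe_finset, card_S]
  congr 1
  omega

end Aux

/-- For the matrix with rows `(0,0,0), (1,0,1), (1,0,0)`, the trees with root color 2
are counted by the odd-indexed Fibonacci numbers `F_{2n-1}`; equivalently the counts
satisfy `E_n = 3E_{n-1} - E_{n-2}`. -/
theorem stmt10 :
    (∀ n, 1 ≤ n →
      colorCount (!![0, 0, 0; 1, 0, 1; 1, 0, 0] : Matrix (Fin 3) (Fin 3) ℕ) 1 n =
        Nat.fib (2 * n - 1)) ∧
    (∀ n, 3 ≤ n →
      colorCount (!![0, 0, 0; 1, 0, 1; 1, 0, 0] : Matrix (Fin 3) (Fin 3) ℕ) 1 n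
          + colorCount (!![0, 0, 0; 1, 0, 1; 1, 0, 0] : Matrix (Fin 3) (Fin 3) ℕ) 1 (n - 2) =
        3 * colorCount (!![0, 0, 0; 1, 0, 1; 1, 0, 0] : Matrix (Fin 3) (Fin 3) ℕ) 1 (n - 1)) := by
  have h1 : ∀ n, 1 ≤ n →
      colorCount (!![0, 0, 0; 1, 0, 1; 1, 0, 0] : Matrix (Fin 3) (Fin 3) ℕ) 1 n =
        Nat.fib (2 * n - 1) := fun n hn => count_eq n hn
  refine ⟨h1, fun n hn => ?_⟩
  obtain ⟨a, rfl⟩ : ∃ a, n = a + 3 := ⟨n - 3, by omega⟩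
  rw [h1 _ (by omega), h1 _ (by omega), h1 _ (by omega)]
  rw [show 2*(a+3)-1 = 2*a+5 from by omega, show 2*(a+3-2)-1 = 2*a+1 from by omega,
      show 2*(a+3-1)-1 = 2*a+3 from by omega]
  have e1 : Nat.fib (2*a+5) = Nat.fib (2*a+3) + Nat.fib (2*a+4) := by
    rw [show 2*a+5 = (2*a+3)+2 from by ring, Nat.fib_add_two,
      show (2*a+3)+1 = 2*a+4 from by ring]
  have e2 : Nat.fib (2*a+4) = Nat.fib (2*a+2) + Nat.fib (2*a+3) := by
    rw [show 2*a+4 = (2*a+2)+2 from by ring, Nat.fib_add_two,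
      show (2*a+2)+1 = 2*a+3 from by ring]
  have e3 : Nat.fib (2*a+3) = Nat.fib (2*a+1) + Nat.fib (2*a+2) := by
    rw [show 2*a+3 = (2*a+1)+2 from by ring, Nat.fib_add_two,
      show (2*a+1)+1 = 2*a+2 from by ring]
  omega
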